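/- In ℂ[x₁,x₂,x₃,x₄] let y₁ = x₁⁶+x₂⁶+x₃⁶+x₄⁶, y₂ = x₁x₂x₃x₄, y₃ = x₁⁴+x₂⁴+x₃⁴+x₄⁴, y₄ = x₁²+x₂²+x₃²+x₄² (the D₄ basic invariants). Then the symmetric 4×4 matrix with entries g^{ij} := ∑_{a=1}^{4} (∂yᵢ/∂xₐ)(∂yⱼ/∂xₐ) satisfies, as identities of polynomials: g^{11} = 30y₁y₃ − 180y₂²y₄ + 30y₁y₄² − 30y₃y₄³ + 6y₄⁵, g^{12} = 6y₂y₃, g^{13} = 32y₁y₄ − 96y₂² + 12y₃² − 24y₃y₄² + 4y₄⁴, g^{14} = 12y₁, g^{22} = (1/6)(2y₁ − 3y₃y₄ + y₄³), g^{23} = 4y₂y₄, g^{24} = 8y₂, g^{33} = 16y₁, g^{34} = 8y₃, g^{44} = 4y₄. -/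

import Mathlib

open MvPolynomial

noncomputable section

/-- The `D₄` basic invariant `y₁ = ∑ xᵢ⁶`. -/
def y₁D4 : MvPolynomial (Fin 4) ℂ := X 0 ^ 6 + X 1 ^ 6 + X 2 ^ 6 + X 3 ^ 6

/-- The `D₄` basic invariant `y₂ = x₁x₂x₃x₄`. -/
def y₂D4 : MvPolynomial (Fin 4) ℂ := X 0 * X 1 * X 2 * X 3

/-- The `D₄` basic invariant `y₃ = ∑ xᵢ⁴`. -/
def y₃D4 : MvPolynomial (Fin 4) ℂ := X 0 ^ 4 + X 1 ^ 4 + X 2 ^ 4 + X 3 ^ 4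

/-- The `D₄` basic invariant `y₄ = ∑ xᵢ²`. -/
def y₄D4 : MvPolynomial (Fin 4) ℂ := X 0 ^ 2 + X 1 ^ 2 + X 2 ^ 2 + X 3 ^ 2

/-! For the power sums `pₖ = ∑ xᵢᵏ` one has `(∇pⱼ, ∇pₖ) = j k p_{j+k-2}`, and Euler's relation
`xₐ ∂π/∂xₐ = π` for `π = ∏ xᵢ` gives `(∇π, ∇pₖ) = k π p_{k-2}`. Since `y₁, y₃, y₄` are power sums
and `y₂ = π`, every entry other than `g²²` is a multiple of some `pₖ` or `π pₖ`, and it remains to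
write `p₈` and `p₁₀` through `p₂, p₄, p₆, π²` in four variables. Finally `g²² = e₃(x₁², …, x₄²)`,
which Newton's identities express as `(2p₆ - 3p₄p₂ + p₂³)/6`. -/

open Finset

namespace MvPolynomial

variable {σ R : Type*} [CommSemiring R]

theorem pderiv_psum [Fintype σ] (i : σ) (k : ℕ) :
    pderiv i (psum σ R k) = (k : MvPolynomial σ R) * X i ^ (k - 1) := by
  classical
  simp [psum, pderiv_X, Pi.single_apply]

theorem sum_pderiv_psum_mul_pderiv_psum [Fintype σ] (j k : ℕ) :
    ∑ a, pderiv a (psum σ R j) * pderiv a (psum σ R k)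
      = (j * k : MvPolynomial σ R) * psum σ R (j + k - 2) := by
  simp_rw [pderiv_psum, psum, mul_sum]
  refine sum_congr rfl fun a _ => ?_
  rcases Nat.eq_zero_or_pos j with rfl | hj
  · simp
  rcases Nat.eq_zero_or_pos k with rfl | hk
  · simp
  rw [show j + k - 2 = (j - 1) + (k - 1) by omega, pow_add]
  ring

theorem pderiv_prod_X [Fintype σ] [DecidableEq σ] (a : σ) :
    pderiv a (∏ b, X b : MvPolynomial σ R) = ∏ b ∈ univ.erase a, X b := by
  nontriviality R
  have h : pderiv a (∏ b ∈ univ.erase a, X b : MvPolynomial σ R) = 0 := by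
    refine pderiv_eq_zero_of_notMem_vars fun ha => ?_
    obtain ⟨b, hb, hab⟩ := mem_biUnion.mp (vars_prod _ ha)
    rw [vars_X, mem_singleton] at hab
    exact (ne_of_mem_erase hb) hab.symm
  rw [← mul_prod_erase univ X (mem_univ a), pderiv_mul, pderiv_X_self, h, one_mul, mul_zero,
    add_zero]

theorem X_mul_pderiv_prod_X [Fintype σ] (a : σ) :
    X a * pderiv a (∏ b, X b : MvPolynomial σ R) = ∏ b, X b := by
  classical
  rw [pderiv_prod_X, mul_prod_erase univ X (mem_univ a)]

theorem sum_pderiv_prod_X_mul_pderiv_psum [Fintype σ] {k : ℕ} (hk : 2 ≤ k) :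
    ∑ a, pderiv a (∏ b, X b : MvPolynomial σ R) * pderiv a (psum σ R k)
      = (k : MvPolynomial σ R) * (∏ b, X b) * psum σ R (k - 2) := by
  simp_rw [pderiv_psum, psum, mul_sum]
  refine sum_congr rfl fun a _ => ?_
  rw [show k - 1 = (k - 2) + 1 by omega, pow_succ]
  conv_rhs => rw [← X_mul_pderiv_prod_X a]
  ring

end MvPolynomial

section FourVariables

variable {R : Type*} [CommRing R]

local notation "p" => psum (Fin 4) R
local notation "π" => (∏ b, X b : MvPolynomial (Fin 4) R)

theorem psum_ten_fin_four :
    36 * p 10 = 30 * p 6 * p 4 - 180 * π ^ 2 * p 2 + 30 * p 6 * p 2 ^ 2 - 30 * p 4 * p 2 ^ 3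
      + 6 * p 2 ^ 5 := by
  simp only [psum, Fin.sum_univ_four, Fin.prod_univ_four]
  ring

theorem psum_eight_fin_four :
    24 * p 8 = 32 * p 6 * p 2 - 96 * π ^ 2 + 12 * p 4 ^ 2 - 24 * p 4 * p 2 ^ 2 + 4 * p 2 ^ 4 := by
  simp only [psum, Fin.sum_univ_four, Fin.prod_univ_four]
  ring

theorem sum_sq_prod_erase_fin_four :
    6 * ∑ a, (∏ b ∈ univ.erase a, X b : MvPolynomial (Fin 4) R) ^ 2
      = 2 * p 6 - 3 * p 4 * p 2 + p 2 ^ 3 := by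
  rw [Fin.sum_univ_four, show univ.erase (0 : Fin 4) = {1, 2, 3} by decide,
    show univ.erase (1 : Fin 4) = {0, 2, 3} by decide,
    show univ.erase (2 : Fin 4) = {0, 1, 3} by decide,
    show univ.erase (3 : Fin 4) = {0, 1, 2} by decide]
  simp [psum, Fin.sum_univ_four]
  ring

end FourVariables

theorem y₁D4_eq_psum : y₁D4 = psum (Fin 4) ℂ 6 := by rw [psum, Fin.sum_univ_four]; rfl

theorem y₂D4_eq_prod_X : y₂D4 = ∏ b : Fin 4, X b := by rw [Fin.prod_univ_four]; rfl

theorem y₃D4_eq_psum : y₃D4 = psum (Fin 4) ℂ 4 := by rw [psum, Fin.sum_univ_four]; rfl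

theorem y₄D4_eq_psum : y₄D4 = psum (Fin 4) ℂ 2 := by rw [psum, Fin.sum_univ_four]; rfl

/-- The intersection form `g^{ij} = (∇yᵢ, ∇yⱼ)` of `D₄` in the basic invariants. -/
theorem statement_10 :
    (∑ a, pderiv a y₁D4 * pderiv a y₁D4)
      = 30 * y₁D4 * y₃D4 - 180 * y₂D4 ^ 2 * y₄D4 + 30 * y₁D4 * y₄D4 ^ 2
        - 30 * y₃D4 * y₄D4 ^ 3 + 6 * y₄D4 ^ 5 ∧
    (∑ a, pderiv a y₁D4 * pderiv a y₂D4) = 6 * y₂D4 * y₃D4 ∧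
    (∑ a, pderiv a y₁D4 * pderiv a y₃D4)
      = 32 * y₁D4 * y₄D4 - 96 * y₂D4 ^ 2 + 12 * y₃D4 ^ 2 - 24 * y₃D4 * y₄D4 ^ 2
        + 4 * y₄D4 ^ 4 ∧
    (∑ a, pderiv a y₁D4 * pderiv a y₄D4) = 12 * y₁D4 ∧
    (∑ a, pderiv a y₂D4 * pderiv a y₂D4)
      = C ((1 : ℂ) / 6) * (2 * y₁D4 - 3 * y₃D4 * y₄D4 + y₄D4 ^ 3) ∧
    (∑ a, pderiv a y₂D4 * pderiv a y₃D4) = 4 * y₂D4 * y₄D4 ∧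
    (∑ a, pderiv a y₂D4 * pderiv a y₄D4) = 8 * y₂D4 ∧
    (∑ a, pderiv a y₃D4 * pderiv a y₃D4) = 16 * y₁D4 ∧
    (∑ a, pderiv a y₃D4 * pderiv a y₄D4) = 8 * y₃D4 ∧
    (∑ a, pderiv a y₄D4 * pderiv a y₄D4) = 4 * y₄D4 := by
  have h6 : (C (1 / 6 : ℂ) : MvPolynomial (Fin 4) ℂ) * 6 = 1 := by
    rw [← map_ofNat C 6, ← C_mul]
    norm_num
  have g22 : ∑ a, pderiv a (∏ b : Fin 4, X b) * pderiv a (∏ b, X b)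
      = C (1 / 6 : ℂ) * (2 * psum (Fin 4) ℂ 6 - 3 * psum _ _ 4 * psum _ _ 2 + psum _ _ 2 ^ 3) := by
    simp_rw [pderiv_prod_X, ← sq]
    rw [← sum_sq_prod_erase_fin_four, ← mul_assoc, h6, one_mul]
  rw [y₁D4_eq_psum, y₂D4_eq_prod_X, y₃D4_eq_psum, y₄D4_eq_psum]
  simp_rw [mul_comm (pderiv _ (psum _ _ 6)) (pderiv _ (∏ b : Fin 4, X b))]
  simp (disch := norm_num) only [sum_pderiv_psum_mul_pderiv_psum,
    sum_pderiv_prod_X_mul_pderiv_psum, g22]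
  norm_num [psum_zero, psum_ten_fin_four, psum_eight_fin_four]
  ring
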